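/- arXiv:2210.15325 — 3 statements merged into one kernel-verified Lean document; each statement's English description precedes it below -/
import Mathlib

section
/- If G₁, …, G_r (r ≥ 1) are uniform geodesic graphs, then gpack(G₁ □ ⋯ □ G_r) ≤ ⌊ n(G₁)⋯n(G_r) / (diam(G₁) + ⋯ + diam(G_r) + 1) ⌋. -/
/-! In a Cartesian product of connected graphs the distance is the sum of the distances in the
factors. A geodesic is maximal exactly when its endpoints are mutually maximally distant, and by
the sum formula a pair of vertices mutually maximally distant in the product is so in every
factor; in a uniform geodesic graph such a pair lies at distance equal to the diameter. Hence
every maximal geodesic of the product has `diam G₁ + ⋯ + diam G_r + 1` vertices, and pairwise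
disjoint ones number at most `n(G₁)⋯n(G_r)` divided by that. -/

open SimpleGraph

/-- A geodesic (shortest path) in `G`: a path whose length equals the distance
between its endpoints. -/
def IsGeodesic {V : Type*} (G : SimpleGraph V) {u v : V} (p : G.Walk u v) : Prop :=
  p.IsPath ∧ p.length = G.dist u v

/-- A maximal geodesic: a geodesic that is not contained as a subpath of any longer
geodesic, equivalently it cannot be extended at either end to a longer geodesic. -/
def IsMaxGeodesic {V : Type*} (G : SimpleGraph V) {u v : V} (p : G.Walk u v) : Prop :=
  IsGeodesic G p ∧
  (∀ w (h : G.Adj w u), ¬ IsGeodesic G (SimpleGraph.Walk.cons h p)) ∧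
  (∀ w (h : G.Adj v w), ¬ IsGeodesic G (p.concat h))

/-- A set of vertices that is the vertex set of some maximal geodesic of `G`. -/
def IsMaxGeodesicSet {V : Type*} (G : SimpleGraph V) (s : Set V) : Prop :=
  ∃ (u v : V) (p : G.Walk u v), IsMaxGeodesic G p ∧ s = {x | x ∈ p.support}

/-- A geodesic packing: a family of pairwise vertex-disjoint maximal geodesics. -/
def IsGeodesicPacking {V : Type*} (G : SimpleGraph V) (P : Set (Set V)) : Prop :=
  (∀ s ∈ P, IsMaxGeodesicSet G s) ∧ P.Pairwise Disjoint

/-- The geodesic packing number `gpack(G)`. -/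
noncomputable def gpackNum {V : Type*} (G : SimpleGraph V) : ℕ :=
  sSup {k | ∃ P : Finset (Set V), IsGeodesicPacking G ↑P ∧ P.card = k}

/-- A geodesic transversal: a vertex set hitting every maximal geodesic. -/
def IsGeodesicTransversal {V : Type*} (G : SimpleGraph V) (S : Set V) : Prop :=
  ∀ s, IsMaxGeodesicSet G s → (S ∩ s).Nonempty

/-- The geodesic transversal number `gt(G)`. -/
noncomputable def gtransNum {V : Type*} (G : SimpleGraph V) : ℕ :=
  sInf {k | ∃ S : Finset V, IsGeodesicTransversal G ↑S ∧ S.card = k}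

/-- The Cartesian product of an indexed family of graphs. -/
def cartProdIndexed {I : Type*} {W : I → Type*} (G : (i : I) → SimpleGraph (W i)) :
    SimpleGraph ((i : I) → W i) where
  Adj x y := ∃ i, (G i).Adj (x i) (y i) ∧ ∀ j, j ≠ i → x j = y j
  symm := by
    constructor
    rintro x y ⟨i, hadj, h⟩
    exact ⟨i, hadj.symm, fun j hj => (h j hj).symm⟩
  loopless := by
    constructor
    rintro x ⟨i, hadj, _⟩
    exact (G i).irrefl hadj

/-- A uniform geodesic graph: connected, and every maximal geodesic has length
equal to the diameter. -/
def UniformGeodesic {V : Type*} (G : SimpleGraph V) : Prop :=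
  G.Connected ∧ ∀ (u v : V) (p : G.Walk u v), IsMaxGeodesic G p → p.length = G.diam

open Function Finset

section Geodesic

variable {V : Type*} {G : SimpleGraph V} {u v : V}

lemma isGeodesic_iff_length_eq_dist {p : G.Walk u v} :
    IsGeodesic G p ↔ p.length = G.dist u v :=
  ⟨And.right, fun h => ⟨p.isPath_of_length_eq_dist h, h⟩⟩

/-- No neighbour of `u` is farther from `v` than `u` (distances to `v` of adjacent vertices
differ by at most one). -/
def IsMaxDistantFrom (G : SimpleGraph V) (u v : V) : Prop :=
  ∀ w, G.Adj w u → G.dist w v ≠ G.dist u v + 1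

lemma isMaxGeodesic_iff {p : G.Walk u v} :
    IsMaxGeodesic G p ↔
      p.length = G.dist u v ∧ IsMaxDistantFrom G u v ∧ IsMaxDistantFrom G v u := by
  simp only [IsMaxGeodesic, isGeodesic_iff_length_eq_dist, Walk.length_cons,
    Walk.length_concat, IsMaxDistantFrom]
  refine and_congr_right fun hp => and_congr ?_ ?_
  · exact forall₂_congr fun w _ => by rw [hp, eq_comm]
  · exact forall_congr' fun w => by
      rw [G.adj_comm, hp, eq_comm, G.dist_comm (u := w), G.dist_comm (u := v)]

lemma SimpleGraph.Walk.IsPath.ncard_support {p : G.Walk u v} (hp : p.IsPath) :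
    {x | x ∈ p.support}.ncard = p.length + 1 := by
  classical
  rw [← p.length_support, ← List.toFinset_card_of_nodup hp.support_nodup,
    ← Set.ncard_coe_finset]
  simp

lemma UniformGeodesic.dist_eq_diam (hG : UniformGeodesic G) (hu : IsMaxDistantFrom G u v)
    (hv : IsMaxDistantFrom G v u) : G.dist u v = G.diam := by
  obtain ⟨p, hp⟩ := hG.1.exists_walk_length_eq_dist u v
  exact hp ▸ hG.2 u v p (isMaxGeodesic_iff.2 ⟨hp, hu, hv⟩)

lemma card_mul_le_of_pairwise_disjoint [Fintype V] {P : Finset (Set V)}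
    (hP : (P : Set (Set V)).Pairwise Disjoint) {k : ℕ} (hk : ∀ s ∈ P, k ≤ s.ncard) :
    #P * k ≤ Fintype.card V :=
  calc #P * k = ∑ s ∈ P, k := by rw [sum_const, smul_eq_mul]
    _ ≤ ∑ s ∈ P, s.ncard := sum_le_sum hk
    _ = (⋃ s ∈ (P : Set (Set V)), s).ncard := by
      rw [P.finite_toSet.ncard_biUnion (fun s _ => s.toFinite) hP, finsum_mem_coe_finset]
    _ ≤ Fintype.card V := by
      rw [← Nat.card_eq_fintype_card]; exact Set.ncard_le_card _

theorem gpackNum_le_card_div [Fintype V] {k : ℕ} (hk₀ : 0 < k)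
    (hk : ∀ s, IsMaxGeodesicSet G s → k ≤ s.ncard) :
    gpackNum G ≤ Fintype.card V / k := by
  refine csSup_le ⟨0, ∅, ⟨by simp, by simp⟩, rfl⟩ ?_
  rintro _ ⟨P, ⟨hPmax, hPdisj⟩, rfl⟩
  exact (Nat.le_div_iff_mul_le hk₀).2
    (card_mul_le_of_pairwise_disjoint hPdisj fun s hs => hk s (hPmax s hs))

end Geodesic

lemma Fintype.sum_apply_update_add {I M : Type*} [Fintype I] [DecidableEq I] [AddCommMonoid M]
    {β : I → Type*} (f : ∀ i, β i → M) (x : ∀ i, β i) (i : I) (a : β i) :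
    ∑ j, f j (update x i a j) + f i (x i) = ∑ j, f j (x j) + f i a := by
  simp_rw [apply_update]
  rw [sum_update_of_mem (mem_univ i), sum_eq_add_sum_sdiff_singleton_of_mem (mem_univ i)]
  abel

section CartProd

variable {I : Type*} {W : I → Type*} {G : ∀ i, SimpleGraph (W i)}

variable (G) in
def cartProdIndexedUpdateHom [DecidableEq I] (x : ∀ i, W i) (i : I) :
    G i →g cartProdIndexed G where
  toFun := update x i
  map_rel' h := ⟨i, by simpa using h, fun j hj => by simp [update_of_ne hj]⟩

@[simp]
lemma cartProdIndexedUpdateHom_apply [DecidableEq I] (x : ∀ i, W i) (i : I) (a : W i) :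
    cartProdIndexedUpdateHom G x i a = update x i a :=
  rfl

lemma exists_walk_cartProdIndexed_length_le (hG : ∀ i, (G i).Connected) (s : Finset I)
    (u v : ∀ i, W i) (huv : ∀ i ∉ s, u i = v i) :
    ∃ p : (cartProdIndexed G).Walk u v, p.length ≤ ∑ i ∈ s, (G i).dist (u i) (v i) := by
  classical
  induction s using Finset.induction generalizing u with
  | empty => exact ⟨Walk.nil.copy rfl (funext fun i => huv i (notMem_empty i)), by simp⟩
  | @insert j s hj ih =>
    obtain ⟨q, hq⟩ := (hG j).exists_walk_length_eq_dist (u j) (v j)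
    have hm : ∀ i ∉ s, update u j (v j) i = v i := by
      intro i hi
      rcases eq_or_ne i j with rfl | hij
      · exact update_self ..
      · rw [update_of_ne hij, huv i (by simp [hij, hi])]
    obtain ⟨p, hp⟩ := ih _ hm
    have hsum : ∑ i ∈ s, (G i).dist (update u j (v j) i) (v i) =
        ∑ i ∈ s, (G i).dist (u i) (v i) :=
      sum_congr rfl fun i hi => by rw [update_of_ne (ne_of_mem_of_not_mem hi hj)]
    refine ⟨((q.map (cartProdIndexedUpdateHom G u j)).copy
      ((cartProdIndexedUpdateHom_apply ..).trans (update_eq_self j u))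
      (cartProdIndexedUpdateHom_apply ..)).append p, ?_⟩
    rw [Walk.length_append, Walk.length_copy, Walk.length_map, hq, sum_insert hj, ← hsum]
    omega

lemma sum_dist_le_sum_dist_add_one_of_adj [Fintype I] {x y : ∀ i, W i}
    (hxy : (cartProdIndexed G).Adj x y) (z : ∀ i, W i) :
    ∑ i, (G i).dist (x i) (z i) ≤ ∑ i, (G i).dist (y i) (z i) + 1 := by
  classical
  obtain ⟨i, hi, hrest⟩ := hxy
  have hy : y = update x i (y i) := funext fun j => by
    rcases eq_or_ne j i with rfl | hji
    · simp
    · rw [update_of_ne hji, hrest j hji]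
  have hstep : (G i).dist (x i) (z i) ≤ (G i).dist (y i) (z i) + 1 := by
    have := hi.symm.diff_dist_adj (u := z i)
    rw [(G i).dist_comm (u := z i), (G i).dist_comm (u := z i)] at this
    omega
  have := Fintype.sum_apply_update_add (fun j a => (G j).dist a (z j)) x i (y i)
  rw [← hy] at this
  omega

lemma sum_dist_le_length [Fintype I] {u v : ∀ i, W i} (p : (cartProdIndexed G).Walk u v) :
    ∑ i, (G i).dist (u i) (v i) ≤ p.length := by
  induction p with
  | nil => simp
  | cons hadj q ih =>
    rw [Walk.length_cons]
    exact (sum_dist_le_sum_dist_add_one_of_adj hadj _).trans (by omega)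

theorem dist_cartProdIndexed [Fintype I] (hG : ∀ i, (G i).Connected) (u v : ∀ i, W i) :
    (cartProdIndexed G).dist u v = ∑ i, (G i).dist (u i) (v i) := by
  obtain ⟨p, hp⟩ := exists_walk_cartProdIndexed_length_le hG univ u v (by simp)
  obtain ⟨q, hq⟩ := Reachable.exists_walk_length_eq_dist ⟨p⟩
  exact le_antisymm ((dist_le p).trans hp) (hq ▸ sum_dist_le_length q)

lemma IsMaxDistantFrom.apply [Fintype I] (hG : ∀ i, (G i).Connected) {u v : ∀ i, W i}
    (h : IsMaxDistantFrom (cartProdIndexed G) u v) (i : I) :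
    IsMaxDistantFrom (G i) (u i) (v i) := by
  classical
  intro w hw hdist
  have hadj := (cartProdIndexedUpdateHom G u i).map_adj hw
  refine h (update u i w) (by simpa using hadj) ?_
  have := Fintype.sum_apply_update_add (fun j a => (G j).dist a (v j)) u i w
  rw [dist_cartProdIndexed hG, dist_cartProdIndexed hG]
  omega

theorem IsMaxGeodesic.length_cartProdIndexed [Fintype I] (hG : ∀ i, UniformGeodesic (G i))
    {u v : ∀ i, W i} {p : (cartProdIndexed G).Walk u v} (hp : IsMaxGeodesic _ p) :
    p.length = ∑ i, (G i).diam := by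
  obtain ⟨hlen, hu, hv⟩ := isMaxGeodesic_iff.1 hp
  have hconn i := (hG i).1
  rw [hlen, dist_cartProdIndexed hconn]
  exact sum_congr rfl fun i _ => (hG i).dist_eq_diam (hu.apply hconn i) (hv.apply hconn i)

end CartProd

theorem gpack_cartProd_le_general (r : ℕ) {W : Fin r → Type*}
    [∀ i, Fintype (W i)] (G : ∀ i, SimpleGraph (W i))
    (h : ∀ i, UniformGeodesic (G i)) :
    gpackNum (cartProdIndexed G) ≤
      (∏ i, Fintype.card (W i)) / ((∑ i, (G i).diam) + 1) := by
  rw [← Fintype.card_pi]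
  refine gpackNum_le_card_div (Nat.succ_pos _) ?_
  rintro s ⟨u, v, p, hp, rfl⟩
  rw [hp.1.1.ncard_support, hp.length_cartProdIndexed h]

theorem gpack_cartProd_le (r : ℕ) (hr : 1 ≤ r) {W : Fin r → Type*}
    [∀ i, Fintype (W i)] (G : ∀ i, SimpleGraph (W i))
    (h : ∀ i, UniformGeodesic (G i)) :
    gpackNum (cartProdIndexed G) ≤
      (∏ i, Fintype.card (W i)) / ((∑ i, (G i).diam) + 1) :=
  gpack_cartProd_le_general r G h
end

section
/- Let T be a tree with no vertices of degree 2, let u be an end support vertex of T, and let u₁,…,u_s be the leaves adjacent to u. Then gpack(T) = gpack(T − {u, u₁, …, u_s}) + 1, and moreover there exists a maximum geodesic packing of T containing the path u₁ u u₂. -/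
/-! In an acyclic graph a maximal geodesic is just a path each of whose ends has all its
neighbours on the path. Let `S` be `T` minus `u` and its leaves. A maximal geodesic of `T`
avoiding `u` lies in `S` (a leaf on it drags its neighbour `u` along). The only vertex of `S`
with a neighbour outside `S` is the non-leaf neighbour of `u`; having no degree 2, it keeps two
neighbours in `T[S]`, so it cannot be an end of a maximal geodesic of `T[S]`, and the maximal
geodesics of `T[S]` are exactly those of `T` inside `S`. Hence restricting a packing of `T` to
`T[S]` loses at most the member through `u`, while a maximum packing of `T[S]` extends by
`u₁ u u₂` (or by the edge `u u₁` when `u` has a single leaf, which makes `T` an edge). -/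

open SimpleGraph

/-- A leaf: a vertex with exactly one neighbor. -/
def IsLeafVertex {V : Type*} (G : SimpleGraph V) (w : V) : Prop :=
  ∃! x, G.Adj w x

namespace SimpleGraph

variable {V : Type*} {G : SimpleGraph V}

theorem IsAcyclic.isGeodesic_of_isPath (hG : G.IsAcyclic) {a b : V} {p : G.Walk a b}
    (hp : p.IsPath) : IsGeodesic G p := by
  obtain ⟨q, hq, hlen⟩ := p.reachable.exists_path_of_dist
  refine ⟨hp, ?_⟩
  rw [← hlen, Subtype.mk.inj ((hG.subsingleton_path a b).elim ⟨p, hp⟩ ⟨q, hq⟩)]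

theorem IsAcyclic.isMaxGeodesic_iff (hG : G.IsAcyclic) {a b : V} {p : G.Walk a b} :
    IsMaxGeodesic G p ↔
      p.IsPath ∧ (∀ w, G.Adj a w → w ∈ p.support) ∧ (∀ w, G.Adj b w → w ∈ p.support) := by
  constructor
  · rintro ⟨⟨hp, -⟩, hcons, hconcat⟩
    refine ⟨hp, fun w hw => ?_, fun w hw => ?_⟩
    · by_contra hwp
      exact hcons w hw.symm (hG.isGeodesic_of_isPath (hp.cons hwp))
    · by_contra hwp
      exact hconcat w hw (hG.isGeodesic_of_isPath (hp.concat hwp hw))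
  · rintro ⟨hp, ha, hb⟩
    refine ⟨hG.isGeodesic_of_isPath hp, fun w hw hgeo => ?_, fun w hw hgeo => ?_⟩
    · exact ((Walk.cons_isPath_iff _ _).mp hgeo.1).2 (ha w hw.symm)
    · exact ((Walk.concat_isPath_iff _).mp hgeo.1).2 (hb w hw)

theorem Walk.exists_mem_support_adj_of_ne_start {a b x : V} (p : G.Walk a b)
    (hx : x ∈ p.support) (hxa : x ≠ a) : ∃ y ∈ p.support, G.Adj x y := by
  classical
  let q := p.takeUntil x hx
  exact ⟨q.penultimate, p.support_takeUntil_subset_support hx (q.getVert_mem_support _),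
    (q.adj_penultimate (Walk.not_nil_of_ne hxa.symm)).symm⟩

theorem IsMaxGeodesic.mem_support_of_isLeafVertex (hG : G.IsAcyclic) {a b x y : V}
    {p : G.Walk a b} (hp : IsMaxGeodesic G p) (hx : x ∈ p.support)
    (hleaf : IsLeafVertex G x) (hxy : G.Adj x y) : y ∈ p.support := by
  by_cases hxa : x = a
  · subst hxa
    exact (hG.isMaxGeodesic_iff.mp hp).2.1 y hxy
  obtain ⟨z, hz, hxz⟩ := p.exists_mem_support_adj_of_ne_start hx hxa
  rwa [hleaf.unique hxy hxz]

theorem IsMaxGeodesicSet.nonempty {t : Set V} (ht : IsMaxGeodesicSet G t) : t.Nonempty := by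
  obtain ⟨a, -, p, -, rfl⟩ := ht
  exact ⟨a, p.start_mem_support⟩

theorem isMaxGeodesicSet_leaf_adj_leaf (hG : G.IsAcyclic) {u u₁ u₂ : V} (hne : u₁ ≠ u₂)
    (h₁ : G.Adj u u₁) (h₂ : G.Adj u u₂) (hl₁ : IsLeafVertex G u₁) (hl₂ : IsLeafVertex G u₂) :
    IsMaxGeodesicSet G {u₁, u, u₂} := by
  refine ⟨u₁, u₂, .cons h₁.symm (.cons h₂ .nil), hG.isMaxGeodesic_iff.mpr ⟨?_, ?_, ?_⟩, ?_⟩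
  · simp [h₁.ne', h₂.ne, hne]
  · intro w hw
    simp [hl₁.unique hw h₁.symm]
  · intro w hw
    simp [hl₂.unique hw h₂.symm]
  · ext; simp

variable (G) in
def BoundaryHasTwoNeighborsIn (s : Set V) : Prop :=
  ∀ x ∈ s, ∀ y ∉ s, G.Adj x y → ∃ z₁ ∈ s, ∃ z₂ ∈ s, z₁ ≠ z₂ ∧ G.Adj x z₁ ∧ G.Adj x z₂

variable {s : Set V}

theorem forall_adj_mem_of_subsingleton_neighborSet_inter {S : Set V}
    (hs : BoundaryHasTwoNeighborsIn G s) {x : V} (hx : x ∈ s)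
    (hS : (G.neighborSet x ∩ S).Subsingleton)
    (h : ∀ w ∈ s, G.Adj x w → w ∈ S) : ∀ w, G.Adj x w → w ∈ S := by
  intro w hw
  by_cases hws : w ∈ s
  · exact h w hws hw
  obtain ⟨z₁, hz₁, z₂, hz₂, hne, h₁, h₂⟩ := hs x hx w hws hw
  exact absurd (hS ⟨h₁, h z₁ hz₁ h₁⟩ ⟨h₂, h z₂ hz₂ h₂⟩) hne

theorem Walk.coe_mem_support_map_induce {a b : s} (q : (G.induce s).Walk a b) (w : s) :
    (w : V) ∈ (q.map (Embedding.induce s).toHom).support ↔ w ∈ q.support := by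
  rw [Walk.support_map]
  exact List.mem_map_of_injective Subtype.val_injective

theorem IsMaxGeodesic.of_map_induce (hG : G.IsAcyclic) {a b : s} {q : (G.induce s).Walk a b}
    (hq : IsMaxGeodesic G (q.map (Embedding.induce s).toHom)) : IsMaxGeodesic (G.induce s) q := by
  obtain ⟨hp, ha, hb⟩ := hG.isMaxGeodesic_iff.mp hq
  refine (hG.induce s).isMaxGeodesic_iff.mpr
    ⟨(Walk.isPath_map_iff_of_injective Subtype.val_injective).mp hp, fun w hw => ?_,
      fun w hw => ?_⟩
  · exact (q.coe_mem_support_map_induce w).mp (ha w hw)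
  · exact (q.coe_mem_support_map_induce w).mp (hb w hw)

theorem IsMaxGeodesic.map_induce (hG : G.IsAcyclic) (hs : BoundaryHasTwoNeighborsIn G s)
    {a b : s} {q : (G.induce s).Walk a b} (hq : IsMaxGeodesic (G.induce s) q) :
    IsMaxGeodesic G (q.map (Embedding.induce s).toHom) := by
  obtain ⟨hq, ha, hb⟩ := (hG.induce s).isMaxGeodesic_iff.mp hq
  have hp : (q.map (Embedding.induce s).toHom).IsPath :=
    (Walk.isPath_map_iff_of_injective Subtype.val_injective).mpr hq
  refine hG.isMaxGeodesic_iff.mpr ⟨hp, ?_, ?_⟩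
  · refine forall_adj_mem_of_subsingleton_neighborSet_inter hs a.2
      (fun z₁ h₁ z₂ h₂ => (hG.eq_snd_of_adj_start hp h₁.1 h₁.2).trans
        (hG.eq_snd_of_adj_start hp h₂.1 h₂.2).symm) fun w hws hw => ?_
    exact (q.coe_mem_support_map_induce ⟨w, hws⟩).mpr (ha ⟨w, hws⟩ hw)
  · refine forall_adj_mem_of_subsingleton_neighborSet_inter hs b.2
      (fun z₁ h₁ z₂ h₂ => (hG.eq_penultimate_of_adj_end hp h₁.1 h₁.2).trans
        (hG.eq_penultimate_of_adj_end hp h₂.1 h₂.2).symm) fun w hws hw => ?_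
    exact (q.coe_mem_support_map_induce ⟨w, hws⟩).mpr (hb ⟨w, hws⟩ hw)

theorem IsMaxGeodesicSet.image_val (hG : G.IsAcyclic) (hs : BoundaryHasTwoNeighborsIn G s)
    {t : Set s} (ht : IsMaxGeodesicSet (G.induce s) t) :
    IsMaxGeodesicSet G (Subtype.val '' t) := by
  obtain ⟨a, b, q, hq, rfl⟩ := ht
  refine ⟨_, _, _, hq.map_induce hG hs, ?_⟩
  ext x
  constructor
  · rintro ⟨y, hy, rfl⟩
    exact (q.coe_mem_support_map_induce y).mpr hy
  · intro hx
    rw [Set.mem_ofPred_eq, Walk.support_map, List.mem_map] at hx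
    exact hx

theorem IsMaxGeodesicSet.preimage_val (hG : G.IsAcyclic) {t : Set V}
    (ht : IsMaxGeodesicSet G t) (hts : t ⊆ s) :
    IsMaxGeodesicSet (G.induce s) (Subtype.val ⁻¹' t) := by
  obtain ⟨a, b, p, hp, rfl⟩ := ht
  have hps : ∀ x ∈ p.support, x ∈ s := fun x hx => hts hx
  refine ⟨_, _, p.induce s hps, IsMaxGeodesic.of_map_induce hG (by rwa [Walk.map_induce]), ?_⟩
  ext
  simp

theorem IsGeodesicPacking.mono {P Q : Set (Set V)} (hP : IsGeodesicPacking G P) (hQP : Q ⊆ P) :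
    IsGeodesicPacking G Q :=
  ⟨fun t ht => hP.1 t (hQP ht), hP.2.mono hQP⟩

theorem IsGeodesicPacking.insert {P : Set (Set V)} {g : Set V} (hP : IsGeodesicPacking G P)
    (hg : IsMaxGeodesicSet G g) (hgP : ∀ t ∈ P, Disjoint g t) :
    IsGeodesicPacking G (insert g P) := by
  refine ⟨?_, Set.pairwise_insert_of_symm.mpr ⟨hP.2, fun t ht _ => hgP t ht⟩⟩
  rintro t (rfl | ht)
  exacts [hg, hP.1 t ht]

theorem IsGeodesicPacking.image_val (hG : G.IsAcyclic) (hs : BoundaryHasTwoNeighborsIn G s)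
    {P : Set (Set s)} (hP : IsGeodesicPacking (G.induce s) P) :
    IsGeodesicPacking G (Set.image Subtype.val '' P) := by
  refine ⟨?_, ?_⟩
  · rintro _ ⟨t, ht, rfl⟩
    exact (hP.1 t ht).image_val hG hs
  · rintro _ ⟨t₁, h₁, rfl⟩ _ ⟨t₂, h₂, rfl⟩ hne
    exact (Set.disjoint_image_iff Subtype.val_injective).mpr
      (hP.2 h₁ h₂ fun h => hne (congrArg _ h))

theorem IsGeodesicPacking.preimage_val (hG : G.IsAcyclic) {P : Set (Set V)}
    (hP : IsGeodesicPacking G P) (hPs : ∀ t ∈ P, t ⊆ s) :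
    IsGeodesicPacking (G.induce s) (Set.preimage Subtype.val '' P) := by
  refine ⟨?_, ?_⟩
  · rintro _ ⟨t, ht, rfl⟩
    exact (hP.1 t ht).preimage_val hG (hPs t ht)
  · rintro _ ⟨t₁, h₁, rfl⟩ _ ⟨t₂, h₂, rfl⟩ hne
    exact (hP.2 h₁ h₂ fun h => hne (congrArg _ h)).preimage _

open Classical in
theorem IsGeodesicPacking.card_filter_mem_le_one {P : Finset (Set V)}
    (hP : IsGeodesicPacking G ↑P) (u : V) : (P.filter (u ∈ ·)).card ≤ 1 := by
  refine Finset.card_le_one.mpr fun t₁ h₁ t₂ h₂ => ?_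
  rw [Finset.mem_filter] at h₁ h₂
  by_contra hne
  exact Set.disjoint_left.mp (hP.2 h₁.1 h₂.1 hne) h₁.2 h₂.2

section Finite

variable [Finite V]

theorem bddAbove_packing_card (G : SimpleGraph V) :
    BddAbove {k | ∃ P : Finset (Set V), IsGeodesicPacking G ↑P ∧ P.card = k} := by
  have := Fintype.ofFinite (Set V)
  exact ⟨Fintype.card (Set V), fun k ⟨P, _, hk⟩ => hk ▸ P.card_le_univ⟩

theorem exists_isGeodesicPacking_card_eq_gpackNum (G : SimpleGraph V) :
    ∃ P : Finset (Set V), IsGeodesicPacking G ↑P ∧ P.card = gpackNum G := by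
  refine Nat.sSup_mem ?_ (bddAbove_packing_card G)
  exact ⟨0, ∅, ⟨by simp, by simp⟩, rfl⟩

theorem IsGeodesicPacking.card_le_gpackNum {P : Finset (Set V)} (hP : IsGeodesicPacking G ↑P) :
    P.card ≤ gpackNum G :=
  le_csSup (bddAbove_packing_card G) ⟨P, hP, rfl⟩

theorem gpackNum_le_gpackNum_induce_add_one (hG : G.IsAcyclic) {u : V}
    (hcover : ∀ t, IsMaxGeodesicSet G t → u ∉ t → t ⊆ s) :
    gpackNum G ≤ gpackNum (G.induce s) + 1 := by
  classical
  obtain ⟨P, hP, hcard⟩ := exists_isGeodesicPacking_card_eq_gpackNum G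
  set P₁ := P.filter (u ∉ ·)
  have hP₁s : ∀ t ∈ P₁, t ⊆ s := fun t ht =>
    hcover t (hP.1 t (Finset.mem_filter.mp ht).1) (Finset.mem_filter.mp ht).2
  have hpack : IsGeodesicPacking (G.induce s) ↑(P₁.image (Subtype.val ⁻¹' · : Set V → Set s)) := by
    rw [Finset.coe_image]
    exact (hP.mono (Finset.coe_subset.mpr (Finset.filter_subset _ P))).preimage_val hG hP₁s
  have hinj : Set.InjOn (Subtype.val ⁻¹' · : Set V → Set s) P₁ := fun t₁ h₁ t₂ h₂ h => by
    rwa [Subtype.preimage_coe_eq_preimage_coe_iff, Set.inter_eq_right.mpr (hP₁s t₁ h₁),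
      Set.inter_eq_right.mpr (hP₁s t₂ h₂)] at h
  calc gpackNum G = P₁.card + (P.filter (u ∈ ·)).card := by
        rw [← hcard, add_comm, Finset.card_filter_add_card_filter_not]
    _ ≤ (P₁.image (Subtype.val ⁻¹' · : Set V → Set s)).card + 1 := by
        rw [Finset.card_image_of_injOn hinj]
        gcongr
        exact hP.card_filter_mem_le_one u
    _ ≤ gpackNum (G.induce s) + 1 := by
        gcongr
        exact hpack.card_le_gpackNum

theorem exists_isGeodesicPacking_card_eq_gpackNum_induce_add_one (hG : G.IsAcyclic)
    (hs : BoundaryHasTwoNeighborsIn G s) {g : Set V} (hg : IsMaxGeodesicSet G g)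
    (hgs : Disjoint g s) :
    ∃ P : Finset (Set V), IsGeodesicPacking G ↑P ∧ P.card = gpackNum (G.induce s) + 1 ∧ g ∈ P := by
  classical
  obtain ⟨P, hP, hcard⟩ := exists_isGeodesicPacking_card_eq_gpackNum (G.induce s)
  set Q := P.image (Subtype.val '' ·)
  have hgQ : ∀ t ∈ (Q : Set (Set V)), Disjoint g t := by
    intro t ht
    obtain ⟨t', -, rfl⟩ := Finset.mem_image.mp ht
    exact hgs.mono_right (Subtype.coe_image_subset s t')
  have hgnot : g ∉ Q := fun h => hg.nonempty.ne_empty (disjoint_self.mp (hgQ g h))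
  refine ⟨insert g Q, ?_, ?_, Finset.mem_insert_self g Q⟩
  · rw [Finset.coe_insert]
    exact IsGeodesicPacking.insert (by rw [Finset.coe_image]; exact hP.image_val hG hs) hg hgQ
  · rw [Finset.card_insert_of_notMem hgnot,
      Finset.card_image_of_injective _ (Set.image_injective.mpr Subtype.val_injective), hcard]

end Finite

theorem exists_adj_ne_ne_of_not_neighborSet_eq_pair {x : V}
    (hx : ¬ ∃ a b : V, a ≠ b ∧ G.neighborSet x = {a, b}) {y₁ y₂ : V} (hne : y₁ ≠ y₂)
    (h₁ : G.Adj x y₁) (h₂ : G.Adj x y₂) : ∃ y₃, G.Adj x y₃ ∧ y₃ ≠ y₁ ∧ y₃ ≠ y₂ := by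
  by_contra! h
  refine hx ⟨y₁, y₂, hne, Set.ext fun z => ⟨fun hz => ?_, ?_⟩⟩
  · by_cases hz₁ : z = y₁
    · exact Or.inl hz₁
    · exact Or.inr (h z hz hz₁)
  · rintro (rfl | rfl) <;> assumption

variable (G) in
def leafStarCompl (u : V) : Set V :=
  {v | v ≠ u ∧ ¬ (G.Adj u v ∧ IsLeafVertex G v)}

section LeafStarCompl

variable {u : V}

theorem disjoint_leafStarCompl {g : Set V}
    (hg : ∀ x ∈ g, x = u ∨ (G.Adj u x ∧ IsLeafVertex G x)) : Disjoint g (G.leafStarCompl u) :=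
  Set.disjoint_left.mpr fun x hx hxs => (hg x hx).elim hxs.1 hxs.2

theorem disjoint_leafStarCompl_leaf_adj_leaf {u₁ u₂ : V} (h₁ : G.Adj u u₁) (h₂ : G.Adj u u₂)
    (hl₁ : IsLeafVertex G u₁) (hl₂ : IsLeafVertex G u₂) :
    Disjoint ({u₁, u, u₂} : Set V) (G.leafStarCompl u) := by
  refine disjoint_leafStarCompl ?_
  rintro x (rfl | rfl | rfl)
  exacts [Or.inr ⟨h₁, hl₁⟩, Or.inl rfl, Or.inr ⟨h₂, hl₂⟩]

theorem mem_leafStarCompl_of_adj {x z : V} (hx : x ∈ G.leafStarCompl u) (hxz : G.Adj x z)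
    (hzu : z ≠ u) : z ∈ G.leafStarCompl u :=
  ⟨hzu, fun ⟨huz, hz⟩ => hx.1 (hz.unique hxz.symm huz.symm)⟩

theorem boundaryHasTwoNeighborsIn_leafStarCompl
    (hno2 : ∀ v : V, ¬ ∃ a b : V, a ≠ b ∧ G.neighborSet v = {a, b}) :
    BoundaryHasTwoNeighborsIn G (G.leafStarCompl u) := by
  intro x hx y hy hxy
  obtain rfl : y = u := by_contra fun hyu => hy (mem_leafStarCompl_of_adj hx hxy hyu)
  obtain ⟨z₁, hz₁, hz₁y⟩ : ∃ z, G.Adj x z ∧ z ≠ y := by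
    by_contra! h
    exact hx.2 ⟨hxy.symm, y, hxy, h⟩
  obtain ⟨z₂, hz₂, hz₂y, hz₂₁⟩ := exists_adj_ne_ne_of_not_neighborSet_eq_pair (hno2 x)
    hz₁y.symm hxy hz₁
  exact ⟨z₁, mem_leafStarCompl_of_adj hx hz₁ hz₁y, z₂, mem_leafStarCompl_of_adj hx hz₂ hz₂y,
    hz₂₁.symm, hz₁, hz₂⟩

theorem IsMaxGeodesicSet.subset_leafStarCompl (hG : G.IsAcyclic) {t : Set V}
    (ht : IsMaxGeodesicSet G t) (hu : u ∉ t) : t ⊆ G.leafStarCompl u := by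
  obtain ⟨a, b, p, hp, rfl⟩ := ht
  exact fun x hx => ⟨fun hxu => hu (hxu ▸ hx),
    fun ⟨hux, hleaf⟩ => hu (hp.mem_support_of_isLeafVertex hG hx hleaf hux.symm)⟩

theorem exists_isMaxGeodesicSet_disjoint_leafStarCompl (hG : G.IsAcyclic)
    (hno2 : ¬ ∃ a b : V, a ≠ b ∧ G.neighborSet u = {a, b})
    (hsupp : ∃ w, G.Adj u w ∧ IsLeafVertex G w)
    (hend : ∀ w₁ w₂, G.Adj u w₁ → G.Adj u w₂ → ¬ IsLeafVertex G w₁ →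
      ¬ IsLeafVertex G w₂ → w₁ = w₂) :
    ∃ g, IsMaxGeodesicSet G g ∧ Disjoint g (G.leafStarCompl u) := by
  obtain ⟨w, huw, hw⟩ := hsupp
  by_cases htwo : ∃ w', G.Adj u w' ∧ IsLeafVertex G w' ∧ w' ≠ w
  · obtain ⟨w', huw', hw', hne⟩ := htwo
    exact ⟨_, isMaxGeodesicSet_leaf_adj_leaf hG hne huw' huw hw' hw,
      disjoint_leafStarCompl_leaf_adj_leaf huw' huw hw' hw⟩
  push Not at htwo
  -- `u` is a leaf: a non-leaf neighbour would force a third neighbour, again a non-leaf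
  have hu : ∀ v, G.Adj u v → v = w := by
    intro v huv
    by_contra hvw
    have hv : ¬ IsLeafVertex G v := fun hv => hvw (htwo v huv hv)
    obtain ⟨z, huz, hzw, hzv⟩ :=
      exists_adj_ne_ne_of_not_neighborSet_eq_pair hno2 (Ne.symm hvw) huw huv
    exact hzv (hend z v huz huv (fun hz => hzw (htwo z huz hz)) hv)
  refine ⟨{x | x ∈ (Walk.cons huw .nil).support}, ⟨u, w, _, ?_, rfl⟩, disjoint_leafStarCompl ?_⟩
  · refine hG.isMaxGeodesic_iff.mpr ⟨by simp [huw.ne], fun v hv => ?_, fun v hv => ?_⟩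
    · simp [hu v hv]
    · simp [hw.unique hv huw.symm]
  · intro x hx
    simp only [Set.mem_ofPred_eq, Walk.support_cons, Walk.support_nil, List.mem_cons,
      List.not_mem_nil, or_false] at hx
    rcases hx with rfl | rfl
    exacts [Or.inl rfl, Or.inr ⟨huw, hw⟩]

end LeafStarCompl

end SimpleGraph

theorem gpack_endSupport_general {V : Type*} [Fintype V] (T : SimpleGraph V)
    (ha : T.IsAcyclic)
    (hno2 : ∀ v : V, ¬ ∃ x y : V, x ≠ y ∧ T.neighborSet v = {x, y})
    (u : V) (hsupp : ∃ w, T.Adj u w ∧ IsLeafVertex T w)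
    (hend : ∀ w₁ w₂, T.Adj u w₁ → T.Adj u w₂ → ¬ IsLeafVertex T w₁ →
      ¬ IsLeafVertex T w₂ → w₁ = w₂) :
    gpackNum T =
      gpackNum (T.induce {v : V | v ≠ u ∧ ¬ (T.Adj u v ∧ IsLeafVertex T v)}) + 1 ∧
    ∀ u₁ u₂ : V, u₁ ≠ u₂ → T.Adj u u₁ → T.Adj u u₂ → IsLeafVertex T u₁ →
      IsLeafVertex T u₂ →
      ∃ Psi : Finset (Set V), IsGeodesicPacking T ↑Psi ∧ Psi.card = gpackNum T ∧
        ({u₁, u, u₂} : Set V) ∈ Psi := by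
  have hs := boundaryHasTwoNeighborsIn_leafStarCompl (u := u) hno2
  have hupper : gpackNum T ≤ gpackNum (T.induce (T.leafStarCompl u)) + 1 :=
    gpackNum_le_gpackNum_induce_add_one ha fun t ht hu => ht.subset_leafStarCompl ha hu
  obtain ⟨g, hg, hgs⟩ := exists_isMaxGeodesicSet_disjoint_leafStarCompl ha (hno2 u) hsupp hend
  obtain ⟨P, hP, hcard, -⟩ := exists_isGeodesicPacking_card_eq_gpackNum_induce_add_one ha hs hg hgs
  have hgpack : gpackNum T = gpackNum (T.induce (T.leafStarCompl u)) + 1 :=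
    le_antisymm hupper (hcard ▸ hP.card_le_gpackNum)
  refine ⟨hgpack, fun u₁ u₂ hne h₁ h₂ hl₁ hl₂ => ?_⟩
  obtain ⟨Psi, hPsi, hcard, hmem⟩ := exists_isGeodesicPacking_card_eq_gpackNum_induce_add_one ha
    hs (isMaxGeodesicSet_leaf_adj_leaf ha hne h₁ h₂ hl₁ hl₂)
    (disjoint_leafStarCompl_leaf_adj_leaf h₁ h₂ hl₁ hl₂)
  exact ⟨Psi, hPsi, hcard.trans hgpack.symm, hmem⟩

theorem gpack_endSupport {V : Type*} [Fintype V] (T : SimpleGraph V)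
    (hc : T.Connected) (ha : T.IsAcyclic)
    (hno2 : ∀ v : V, ¬ ∃ x y : V, x ≠ y ∧ T.neighborSet v = {x, y})
    (u : V) (hsupp : ∃ w, T.Adj u w ∧ IsLeafVertex T w)
    (hend : ∀ w₁ w₂, T.Adj u w₁ → T.Adj u w₂ → ¬ IsLeafVertex T w₁ →
      ¬ IsLeafVertex T w₂ → w₁ = w₂) :
    gpackNum T =
      gpackNum (T.induce {v : V | v ≠ u ∧ ¬ (T.Adj u v ∧ IsLeafVertex T v)}) + 1 ∧
    ∀ u₁ u₂ : V, u₁ ≠ u₂ → T.Adj u u₁ → T.Adj u u₂ → IsLeafVertex T u₁ →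
      IsLeafVertex T u₂ →
      ∃ Psi : Finset (Set V), IsGeodesicPacking T ↑Psi ∧ Psi.card = gpackNum T ∧
        ({u₁, u, u₂} : Set V) ∈ Psi :=
  gpack_endSupport_general T ha hno2 u hsupp hend
end

section
/- If P is a maximal geodesic in the strong product P_{d₁} ⊠ ⋯ ⊠ P_{d_r}, where r ≥ 2 and each d_i ≥ 2, then the number of vertices of P belongs to {d₁, …, d_r}. -/
open SimpleGraph

/-- The strong product of paths `P_{d 0} ⊠ ⋯ ⊠ P_{d (r-1)}` (a diagonal grid):
vertices are tuples, and distinct tuples are adjacent iff their coordinates differ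
by at most `1` everywhere. -/
def strongGrid {r : ℕ} (d : Fin r → ℕ) : SimpleGraph (∀ i, Fin (d i)) where
  Adj x y := x ≠ y ∧ ∀ i, (x i : ℕ) ≤ (y i : ℕ) + 1 ∧ (y i : ℕ) ≤ (x i : ℕ) + 1
  symm := by
    constructor
    rintro x y ⟨hne, h⟩
    exact ⟨hne.symm, fun i => ⟨(h i).2, (h i).1⟩⟩
  loopless := ⟨fun x h => h.1 rfl⟩


/-!
The graph distance of the strong grid is the Chebyshev distance `max_i |x_i - y_i|`. Let
`p` be a maximal geodesic from `u` to `v` and let `i` be a coordinate in which `|u_i - v_i|`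
is maximal. If `u_i` could be moved one step away from `v_i` inside `[0, d_i - 1]`, the
resulting neighbour of `u` would be one step farther from `v`, and prepending it to `p` would
give a longer geodesic. Hence `u_i` and, by symmetry, `v_i` are the two ends of
`[0, d_i - 1]`, and `p` has `|u_i - v_i| + 1 = d_i` vertices.
-/

open SimpleGraph Finset

section MaxGeodesic

variable {V : Type*} {G : SimpleGraph V} {u v : V}

lemma IsGeodesic.reverse {p : G.Walk u v} (hp : IsGeodesic G p) : IsGeodesic G p.reverse :=
  ⟨hp.1.reverse, by rw [Walk.length_reverse, dist_comm]; exact hp.2⟩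

lemma IsMaxGeodesic.reverse {p : G.Walk u v} (hp : IsMaxGeodesic G p) :
    IsMaxGeodesic G p.reverse := by
  refine ⟨hp.1.reverse, fun w h hg => ?_, fun w h hg => ?_⟩
  · apply hp.2.2 w h.symm
    have := hg.reverse
    rwa [Walk.reverse_cons, Walk.reverse_reverse] at this
  · apply hp.2.1 w h.symm
    have := hg.reverse
    rwa [Walk.reverse_concat, Walk.reverse_reverse] at this

lemma SimpleGraph.Walk.dist_le_length_of_mem_support (p : G.Walk u v) {x : V}
    (hx : x ∈ p.support) : G.dist x v ≤ p.length := by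
  classical
  exact (dist_le (p.dropUntil x hx)).trans (p.length_dropUntil_le_length hx)

lemma IsMaxGeodesic.dist_le_of_adj {p : G.Walk u v} (hp : IsMaxGeodesic G p) {w : V}
    (h : G.Adj w u) : G.dist w v ≤ G.dist u v := by
  by_contra! hlt
  have hlen : p.length = G.dist u v := hp.1.2
  have hw : w ∉ p.support := fun hw => by
    have := p.dist_le_length_of_mem_support hw
    omega
  refine hp.2.1 w h ⟨hp.1.1.cons hw, le_antisymm ?_ (dist_le _)⟩
  rw [Walk.length_cons]
  omega

end MaxGeodesic

def Fin.stepToward {n : ℕ} (a b : Fin n) : Fin n :=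
  if h : (a : ℕ) < b then ⟨a + 1, by omega⟩
  else if (b : ℕ) < a then ⟨a - 1, by omega⟩ else a

namespace Fin

variable {n : ℕ} (a b : Fin n)

lemma val_stepToward :
    (a.stepToward b : ℕ) =
      if (a : ℕ) < b then (a : ℕ) + 1 else if (b : ℕ) < a then (a : ℕ) - 1 else a := by
  unfold stepToward
  split_ifs <;> rfl

lemma dist_stepToward_self : Nat.dist (a.stepToward b) a ≤ 1 := by
  rw [Nat.dist, val_stepToward]
  split_ifs <;> omega

lemma dist_stepToward : Nat.dist (a.stepToward b) b = Nat.dist a b - 1 := by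
  rw [Nat.dist, Nat.dist, val_stepToward]
  split_ifs <;> omega

lemma stepToward_eq_self_iff : a.stepToward b = a ↔ a = b := by
  rw [Fin.ext_iff, Fin.ext_iff, val_stepToward]
  split_ifs <;> omega

end Fin

section StrongGrid

variable {r : ℕ} {d : Fin r → ℕ}

def chebyshevDist (x y : ∀ i, Fin (d i)) : ℕ :=
  univ.sup fun i => Nat.dist (x i) (y i)

lemma chebyshevDist_le_iff {x y : ∀ i, Fin (d i)} {n : ℕ} :
    chebyshevDist x y ≤ n ↔ ∀ i, Nat.dist (x i) (y i) ≤ n := by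
  simp [chebyshevDist, Finset.sup_le_iff]

lemma dist_le_chebyshevDist (x y : ∀ i, Fin (d i)) (i : Fin r) :
    Nat.dist (x i) (y i) ≤ chebyshevDist x y :=
  chebyshevDist_le_iff.1 le_rfl i

lemma chebyshevDist_comm (x y : ∀ i, Fin (d i)) : chebyshevDist x y = chebyshevDist y x := by
  simp only [chebyshevDist, Nat.dist_comm]

lemma strongGrid_adj_iff {x y : ∀ i, Fin (d i)} :
    (strongGrid d).Adj x y ↔ x ≠ y ∧ ∀ i, Nat.dist (x i) (y i) ≤ 1 := by
  show (x ≠ y ∧ _) ↔ _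
  exact and_congr_right fun _ => forall_congr' fun i => by unfold Nat.dist; omega

lemma SimpleGraph.Walk.dist_apply_le_length_of_strongGrid {x y : ∀ i, Fin (d i)} (p : (strongGrid d).Walk x y)
    (i : Fin r) : Nat.dist (x i) (y i) ≤ p.length := by
  induction p with
  | nil => simp
  | @cons x z y h q ih =>
    have hstep := (strongGrid_adj_iff.1 h).2 i
    have := Nat.dist.triangle_inequality (x i) (z i) (y i)
    rw [Walk.length_cons]
    omega

lemma exists_walk_length_le_of_chebyshevDist_le {n : ℕ} {x y : ∀ i, Fin (d i)}
    (h : chebyshevDist x y ≤ n) : ∃ p : (strongGrid d).Walk x y, p.length ≤ n := by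
  induction n generalizing x with
  | zero =>
    obtain rfl : x = y := funext fun i => Fin.ext <| by
      have := chebyshevDist_le_iff.1 h i
      unfold Nat.dist at this
      omega
    exact ⟨.nil, le_rfl⟩
  | succ n ih =>
    by_cases hxy : x = y
    · subst hxy
      exact ⟨.nil, Nat.zero_le _⟩
    let x' := fun i => (x i).stepToward (y i)
    have hadj : (strongGrid d).Adj x x' := by
      refine strongGrid_adj_iff.2 ⟨fun hx => hxy (funext fun i => ?_), fun i => ?_⟩
      · exact ((x i).stepToward_eq_self_iff (y i)).1 (congrFun hx i).symm
      · rw [Nat.dist_comm]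
        exact (x i).dist_stepToward_self (y i)
    obtain ⟨q, hq⟩ := ih (x := x') <| chebyshevDist_le_iff.2 fun i => by
      have := chebyshevDist_le_iff.1 h i
      rw [Fin.dist_stepToward]
      omega
    exact ⟨.cons hadj q, by rw [Walk.length_cons]; omega⟩

theorem strongGrid_dist (x y : ∀ i, Fin (d i)) :
    (strongGrid d).dist x y = chebyshevDist x y := by
  obtain ⟨p, hp⟩ := exists_walk_length_le_of_chebyshevDist_le (le_refl (chebyshevDist x y))
  obtain ⟨q, hq⟩ := Reachable.exists_walk_length_eq_dist ⟨p⟩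
  refine le_antisymm ((dist_le p).trans hp) ?_
  rw [← hq]
  exact chebyshevDist_le_iff.2 q.dist_apply_le_length_of_strongGrid

variable {u v : ∀ i, Fin (d i)} {p : (strongGrid d).Walk u v}

lemma IsMaxGeodesic.dist_apply_le_of_strongGrid (hp : IsMaxGeodesic (strongGrid d) p)
    {i : Fin r} (hi : chebyshevDist u v = Nat.dist (u i) (v i)) (c : Fin (d i))
    (hc : Nat.dist c (u i) ≤ 1) : Nat.dist c (v i) ≤ Nat.dist (u i) (v i) := by
  classical
  by_contra! hlt
  have hcu : c ≠ u i := by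
    rintro rfl
    exact lt_irrefl _ hlt
  let w := Function.update u i c
  have hadj : (strongGrid d).Adj w u := by
    refine strongGrid_adj_iff.2 ⟨fun hw => hcu ?_, fun j => ?_⟩
    · simpa [w] using congrFun hw i
    · rcases eq_or_ne j i with rfl | hj
      · simpa [w] using hc
      · simp [w, hj]
  have hfar := dist_le_chebyshevDist w v i
  rw [show w i = c from Function.update_self i c u] at hfar
  have hnear := hp.dist_le_of_adj hadj
  rw [strongGrid_dist, strongGrid_dist, hi] at hnear
  omega

lemma IsMaxGeodesic.val_add_one_eq_of_strongGrid (hp : IsMaxGeodesic (strongGrid d) p)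
    {i : Fin r} (hi : chebyshevDist u v = Nat.dist (u i) (v i)) (hle : (v i : ℕ) ≤ u i) :
    (u i : ℕ) + 1 = d i := by
  have hu := (u i).isLt
  by_contra hne
  have := hp.dist_apply_le_of_strongGrid hi ⟨u i + 1, by omega⟩ (by simp [Nat.dist])
  simp only [Nat.dist] at this
  omega

lemma IsMaxGeodesic.val_eq_zero_of_strongGrid (hp : IsMaxGeodesic (strongGrid d) p)
    {i : Fin r} (hi : chebyshevDist u v = Nat.dist (u i) (v i)) (hle : (u i : ℕ) ≤ v i) :
    (u i : ℕ) = 0 := by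
  have hu := (u i).isLt
  by_contra hne
  have := hp.dist_apply_le_of_strongGrid hi ⟨u i - 1, by omega⟩ (by simp only [Nat.dist]; omega)
  simp only [Nat.dist] at this
  omega

end StrongGrid

theorem strongGrid_maxGeodesic_card_general (r : ℕ) (d : Fin (r + 2) → ℕ)
    {u v : ∀ i, Fin (d i)} (p : (strongGrid d).Walk u v)
    (hp : IsMaxGeodesic (strongGrid d) p) :
    ∃ i, p.support.length = d i := by
  obtain ⟨i, -, hi⟩ := exists_mem_eq_sup univ univ_nonempty fun i => Nat.dist (u i) (v i)
  have hi' : chebyshevDist v u = Nat.dist (v i) (u i) := by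
    rw [chebyshevDist_comm, Nat.dist_comm]
    exact hi
  have hlen : p.support.length = Nat.dist (u i) (v i) + 1 := by
    rw [Walk.length_support, hp.1.2, strongGrid_dist]
    exact congrArg (· + 1) hi
  refine ⟨i, hlen.trans ?_⟩
  unfold Nat.dist
  rcases le_total (v i : ℕ) (u i) with hle | hle
  · have := hp.val_add_one_eq_of_strongGrid hi hle
    have := hp.reverse.val_eq_zero_of_strongGrid hi' hle
    omega
  · have := hp.val_eq_zero_of_strongGrid hi hle
    have := hp.reverse.val_add_one_eq_of_strongGrid hi' hle
    omega

theorem strongGrid_maxGeodesic_card (r : ℕ) (d : Fin (r + 2) → ℕ)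
    (hd : ∀ i, 2 ≤ d i) {u v : ∀ i, Fin (d i)} (p : (strongGrid d).Walk u v)
    (hp : IsMaxGeodesic (strongGrid d) p) :
    ∃ i, p.support.length = d i :=
  strongGrid_maxGeodesic_card_general r d p hp
end
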